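/- arXiv:1911.08081 — 2 statements merged into one kernel-verified Lean document; each statement's English description precedes it below -/
import Mathlib

section
/- Let P be a nonzero homogeneous polynomial in several variables over a field. If P' is obtained from P by setting some of the variables to zero and P' factors as a product of two irreducible homogeneous polynomials P1 · P2 with deg P1 ≥ deg P2, and P'' is obtained from P by setting some (possibly different) variables to zero and factors as Q1 · Q2 with Q1, Q2 irreducible homogeneous and deg Q1 ≥ deg Q2, and if deg P1 > deg Q1 and deg P1 ≠ deg Q2, then P is irreducible. -/
/-!
Suppose `P = A * B` with `A`, `B` non-units, of degrees `a, b > 0`. Substituting `0` or `X i` for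
each variable sends a homogeneous polynomial of degree `k` to one of degree `k` or to zero; as the
specializations of `P` are nonzero, they cannot lower the degree of `A` or `B`. Unique factorization
then matches the specializations of `A` and `B` with the two irreducible factors, so
`{a, b} = {deg P1, deg P2} = {deg Q1, deg Q2}`, which is impossible if `deg P1 ∉ {deg Q1, deg Q2}`.
-/

open MvPolynomial

theorem associated_and_associated_of_mul_eq_mul {M : Type*} [CommMonoidWithZero M]
    [IsCancelMulZero M] {p q x y : M} (hp : Prime p) (hq : Irreducible q) (hx : ¬IsUnit x)
    (hy : ¬IsUnit y) (h : x * y = p * q) :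
    (Associated x p ∧ Associated y q) ∨ (Associated x q ∧ Associated y p) := by
  rcases hp.dvd_or_dvd (h ▸ dvd_mul_right p q) with ⟨d, rfl⟩ | ⟨d, rfl⟩
  · have hdy : d * y = q := mul_left_cancel₀ hp.ne_zero (by rw [← mul_assoc, h])
    have hd : IsUnit d := (hq.isUnit_or_isUnit hdy.symm).resolve_right hy
    exact Or.inl ⟨associated_mul_unit_left p d hd, hdy ▸ (associated_unit_mul_left y d hd).symm⟩
  · have hxd : x * d = q := mul_left_cancel₀ hp.ne_zero (by rw [← h, mul_left_comm])
    have hd : IsUnit d := (hq.isUnit_or_isUnit hxd.symm).resolve_left hx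
    exact Or.inr ⟨hxd ▸ associated_mul_unit_right x d hd, associated_mul_unit_left p d hd⟩

namespace MvPolynomial

variable {σ τ R : Type*}

theorem isHomogeneous_ite_zero_X [CommSemiring R] (p : Prop) [Decidable p] (i : σ) :
    (if p then 0 else X i : MvPolynomial σ R).IsHomogeneous 1 := by
  split
  exacts [isHomogeneous_zero _ _ _, isHomogeneous_X _ _]

theorem totalDegree_aeval_le [CommSemiring R] {g : σ → MvPolynomial τ R}
    (hg : ∀ i, (g i).IsHomogeneous 1) (p : MvPolynomial σ R) :
    (aeval g p).totalDegree ≤ p.totalDegree := by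
  conv_lhs => rw [← sum_homogeneousComponent p, map_sum]
  refine totalDegree_finsetSum_le fun k hk => ?_
  have := ((homogeneousComponent_isHomogeneous k p).aeval g hg).totalDegree_le
  rw [Finset.mem_range] at hk
  omega

section IsDomain

variable [CommRing R] [IsDomain R]

theorem Associated.totalDegree_eq {p q : MvPolynomial σ R} (h : Associated p q) :
    p.totalDegree = q.totalDegree := by
  obtain ⟨u, rfl⟩ := h
  rcases eq_or_ne p 0 with rfl | hp
  · simp
  rw [totalDegree_mul_of_isDomain hp u.ne_zero,
    (isUnit_iff_totalDegree_of_isReduced.1 u.isUnit).2, add_zero]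

theorem totalDegree_aeval_eq_of_isHomogeneous_mul {A B : MvPolynomial σ R} {n : ℕ}
    (hAB : (A * B).IsHomogeneous n) {g : σ → MvPolynomial τ R}
    (hg : ∀ i, (g i).IsHomogeneous 1) (h0 : aeval g (A * B) ≠ 0) :
    (aeval g A).totalDegree = A.totalDegree ∧ (aeval g B).totalDegree = B.totalDegree := by
  have hAB0 : A * B ≠ 0 := fun h => h0 (by rw [h, map_zero])
  have hφAB : (aeval g (A * B)).IsHomogeneous n := by simpa using hAB.aeval g hg
  have hdeg : (aeval g A).totalDegree + (aeval g B).totalDegree =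
      A.totalDegree + B.totalDegree := by
    rw [map_mul] at h0
    rw [← totalDegree_mul_of_isDomain (left_ne_zero_of_mul h0) (right_ne_zero_of_mul h0),
      ← totalDegree_mul_of_isDomain (left_ne_zero_of_mul hAB0) (right_ne_zero_of_mul hAB0),
      ← map_mul, hAB.totalDegree hAB0, hφAB.totalDegree (by rwa [map_mul])]
  have := totalDegree_aeval_le hg A
  have := totalDegree_aeval_le hg B
  omega

end IsDomain

theorem totalDegree_pos_of_not_isUnit [Field R] {p : MvPolynomial σ R} (hp : p ≠ 0)
    (hu : ¬IsUnit p) : 0 < p.totalDegree := by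
  refine Nat.pos_of_ne_zero fun h => hu ?_
  rw [totalDegree_eq_zero_iff_eq_C] at h
  rw [h] at hp ⊢
  exact (isUnit_iff_ne_zero.2 fun hc => hp (by rw [hc, C_0])).map C

theorem totalDegree_eq_or_of_aeval_mul_eq_mul [Field R] {A B : MvPolynomial σ R}
    {P1 P2 : MvPolynomial τ R} {n : ℕ}
    (hAB : (A * B).IsHomogeneous n) (hA : ¬IsUnit A) (hB : ¬IsUnit B)
    {g : σ → MvPolynomial τ R} (hg : ∀ i, (g i).IsHomogeneous 1)
    (hP1 : Irreducible P1) (hP2 : Irreducible P2) (h : aeval g (A * B) = P1 * P2) :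
    (A.totalDegree = P1.totalDegree ∧ B.totalDegree = P2.totalDegree) ∨
      (A.totalDegree = P2.totalDegree ∧ B.totalDegree = P1.totalDegree) := by
  have h0 : aeval g (A * B) ≠ 0 := h ▸ mul_ne_zero hP1.ne_zero hP2.ne_zero
  have hA0 : A ≠ 0 := fun hA0 => h0 (by rw [hA0, zero_mul, map_zero])
  have hB0 : B ≠ 0 := fun hB0 => h0 (by rw [hB0, mul_zero, map_zero])
  obtain ⟨hdegA, hdegB⟩ := totalDegree_aeval_eq_of_isHomogeneous_mul hAB hg h0
  have not_isUnit_aeval {C : MvPolynomial σ R} (hC0 : C ≠ 0) (hC : ¬IsUnit C)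
      (hdeg : (aeval g C).totalDegree = C.totalDegree) : ¬IsUnit (aeval g C) := fun hu =>
    (totalDegree_pos_of_not_isUnit hC0 hC).ne' <|
      hdeg ▸ (isUnit_iff_totalDegree_of_isReduced.1 hu).2
  rw [map_mul] at h
  rw [← hdegA, ← hdegB]
  rcases associated_and_associated_of_mul_eq_mul hP1.prime hP2 (not_isUnit_aeval hA0 hA hdegA)
    (not_isUnit_aeval hB0 hB hdegB) h with ⟨h1, h2⟩ | ⟨h1, h2⟩
  · exact Or.inl ⟨h1.totalDegree_eq, h2.totalDegree_eq⟩
  · exact Or.inr ⟨h1.totalDegree_eq, h2.totalDegree_eq⟩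

end MvPolynomial

theorem stmt0_general {σ F : Type*} [Field F]
    (P P1 P2 Q1 Q2 : MvPolynomial σ F)
    {n n1 m1 m2 : ℕ} (hhom : P.IsHomogeneous n)
    (S T : Set σ) [DecidablePred (· ∈ S)] [DecidablePred (· ∈ T)]
    (h1 : P1.IsHomogeneous n1)
    (hq1 : Q1.IsHomogeneous m1) (hq2 : Q2.IsHomogeneous m2)
    (hi1 : Irreducible P1) (hi2 : Irreducible P2)
    (hj1 : Irreducible Q1) (hj2 : Irreducible Q2)
    (hP' : aeval (fun i => if i ∈ S then 0 else X i) P = P1 * P2)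
    (hP'' : aeval (fun i => if i ∈ T then 0 else X i) P = Q1 * Q2)
    (hgt : m1 < n1) (hne : n1 ≠ m2) :
    Irreducible P := by
  refine irreducible_iff.2 ⟨fun hu => hi1.not_isUnit (isUnit_of_mul_isUnit_left
    (hP' ▸ hu.map (aeval _))), fun A B hAB => ?_⟩
  by_contra! hAB_units
  obtain ⟨hA, hB⟩ := hAB_units
  subst hAB
  have hS := totalDegree_eq_or_of_aeval_mul_eq_mul hhom hA hB
    (fun i => isHomogeneous_ite_zero_X (i ∈ S) i) hi1 hi2 hP'
  have hT := totalDegree_eq_or_of_aeval_mul_eq_mul hhom hA hB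
    (fun i => isHomogeneous_ite_zero_X (i ∈ T) i) hj1 hj2 hP''
  rw [h1.totalDegree hi1.ne_zero] at hS
  rw [hq1.totalDegree hj1.ne_zero, hq2.totalDegree hj2.ne_zero] at hT
  omega

/-- Lemma "keylemma": if two specializations (setting some variables to zero) of a nonzero
homogeneous polynomial `P` factor into two irreducible homogeneous factors with incompatible
degrees, then `P` is irreducible. -/
theorem stmt0 {σ F : Type*} [Field F]
    (P P1 P2 Q1 Q2 : MvPolynomial σ F) (hP : P ≠ 0)
    {n n1 n2 m1 m2 : ℕ} (hhom : P.IsHomogeneous n)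
    (S T : Set σ) [DecidablePred (· ∈ S)] [DecidablePred (· ∈ T)]
    (h1 : P1.IsHomogeneous n1) (h2 : P2.IsHomogeneous n2)
    (hq1 : Q1.IsHomogeneous m1) (hq2 : Q2.IsHomogeneous m2)
    (hi1 : Irreducible P1) (hi2 : Irreducible P2)
    (hj1 : Irreducible Q1) (hj2 : Irreducible Q2)
    (hP' : aeval (fun i => if i ∈ S then 0 else X i) P = P1 * P2)
    (hP'' : aeval (fun i => if i ∈ T then 0 else X i) P = Q1 * Q2)
    (hd12 : n2 ≤ n1) (hd34 : m2 ≤ m1)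
    (hgt : m1 < n1) (hne : n1 ≠ m2) :
    Irreducible P :=
  stmt0_general P P1 P2 Q1 Q2 hhom S T h1 hq1 hq2 hi1 hi2 hj1 hj2 hP' hP'' hgt hne
end

section
/- Let I and J be k-element subsets of {1,…,N} with |I ∩ J| = k−2 and N ≥ k+2. Then the intersection of the star of I and the star of J has exactly 4 elements. -/
/-!
A `k`-set `T` lies in both stars iff at most one of its elements lies outside `I` and at most one
outside `J`.
Since `T \ (I ∩ J) = (T \ I) ∪ (T \ J)` has at least `k - #(I ∩ J) = 2` elements, both differences
are singletons `{b} ⊆ J \ I` and `{a} ⊆ I \ J`, and `T = (I ∩ J) ∪ {a, b}`. Conversely every such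
set lies in both stars, and `a`, `b` are recovered as `T \ J` and `T \ I`; hence there are
`#(I \ J) * #(J \ I) = 2 * 2` of them.
-/

namespace Finset

variable {α : Type*} [DecidableEq α]

def subsetStar [Fintype α] (k : ℕ) (S : Finset α) : Finset (Finset α) :=
  (powersetCard k univ).filter (fun T => k - 1 ≤ #(T ∩ S))

theorem mem_subsetStar [Fintype α] {k : ℕ} {S T : Finset α} :
    T ∈ subsetStar k S ↔ #T = k ∧ #(T \ S) ≤ 1 := by
  have := card_sdiff_add_card_inter T S
  simp only [subsetStar, mem_filter, mem_powersetCard, subset_univ, true_and]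
  omega

section PairOverInter

variable {I J : Finset α} {a b : α}

theorem insert_insert_inter_sdiff_right (ha : a ∈ I \ J) (hb : b ∈ J \ I) :
    insert a (insert b (I ∩ J)) \ J = {a} := by
  rw [mem_sdiff] at ha hb
  ext x
  simp only [mem_sdiff, mem_insert, mem_inter, mem_singleton]
  constructor
  · rintro ⟨rfl | rfl | ⟨-, hxJ⟩, hxJ'⟩
    · rfl
    · exact absurd hb.1 hxJ'
    · exact absurd hxJ hxJ'
  · rintro rfl
    exact ⟨Or.inl rfl, ha.2⟩

theorem insert_insert_inter_sdiff_left (ha : a ∈ I \ J) (hb : b ∈ J \ I) :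
    insert a (insert b (I ∩ J)) \ I = {b} := by
  rw [insert_comm, inter_comm]
  exact insert_insert_inter_sdiff_right hb ha

theorem card_insert_insert_inter (ha : a ∈ I \ J) (hb : b ∈ J \ I) :
    #(insert a (insert b (I ∩ J))) = #(I ∩ J) + 2 := by
  rw [mem_sdiff] at ha hb
  have hab : a ≠ b := by
    rintro rfl
    exact hb.2 ha.1
  rw [card_insert_of_notMem (by simp [hab, ha.2]), card_insert_of_notMem (by simp [hb.2])]

theorem exists_eq_insert_insert_inter {T : Finset α} (hT : #(I ∩ J) + 2 ≤ #T)
    (hTI : #(T \ I) ≤ 1) (hTJ : #(T \ J) ≤ 1) :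
    ∃ a ∈ I \ J, ∃ b ∈ J \ I, T = insert a (insert b (I ∩ J)) := by
  have hsplit : T \ (I ∩ J) = T \ I ∪ T \ J := sdiff_inter_distrib_right T I J
  have hlower : 2 ≤ #(T \ I ∪ T \ J) := hsplit ▸ (le_card_sdiff (I ∩ J) T).trans' (by omega)
  have hupper := card_union_le (T \ I) (T \ J)
  obtain ⟨b, hb⟩ := card_eq_one.mp (show #(T \ I) = 1 by omega)
  obtain ⟨a, ha⟩ := card_eq_one.mp (show #(T \ J) = 1 by omega)
  have hab : a ≠ b := by
    rintro rfl
    rw [hb, ha, union_self, card_singleton] at hlower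
    omega
  obtain ⟨haT, haJ⟩ := mem_sdiff.mp (ha ▸ mem_singleton_self a : a ∈ T \ J)
  obtain ⟨hbT, hbI⟩ := mem_sdiff.mp (hb ▸ mem_singleton_self b : b ∈ T \ I)
  have haI : a ∈ I := by
    by_contra haI
    exact hab (mem_singleton.mp (hb ▸ mem_sdiff.mpr ⟨haT, haI⟩))
  have hbJ : b ∈ J := by
    by_contra hbJ
    exact hab.symm (mem_singleton.mp (ha ▸ mem_sdiff.mpr ⟨hbT, hbJ⟩))
  have hIJT : I ∩ J ⊆ T := by
    have := card_sdiff_add_card_inter T (I ∩ J)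
    rw [hsplit] at this
    exact inter_eq_right.mp (eq_of_subset_of_card_le inter_subset_right (by omega))
  refine ⟨a, mem_sdiff.mpr ⟨haI, haJ⟩, b, mem_sdiff.mpr ⟨hbJ, hbI⟩, ?_⟩
  rw [← sdiff_union_of_subset hIJT, hsplit, hb, ha, insert_eq, insert_eq, union_comm {b},
    union_assoc]

end PairOverInter

variable [Fintype α] {k : ℕ} {I J : Finset α}

theorem subsetStar_inter_subsetStar (hIJ : #(I ∩ J) + 2 = k) :
    subsetStar k I ∩ subsetStar k J =
      ((I \ J) ×ˢ (J \ I)).image (fun p => insert p.1 (insert p.2 (I ∩ J))) := by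
  ext T
  simp only [mem_inter, mem_subsetStar, mem_image, mem_product, Prod.exists]
  constructor
  · rintro ⟨⟨hT, hTI⟩, -, hTJ⟩
    obtain ⟨a, ha, b, hb, rfl⟩ := exists_eq_insert_insert_inter (hT ▸ hIJ.le) hTI hTJ
    exact ⟨a, b, ⟨ha, hb⟩, rfl⟩
  · rintro ⟨a, b, ⟨ha, hb⟩, rfl⟩
    have hcard := (card_insert_insert_inter ha hb).trans hIJ
    rw [insert_insert_inter_sdiff_left ha hb, insert_insert_inter_sdiff_right ha hb,
      card_singleton]
    exact ⟨⟨hcard, le_rfl⟩, hcard, le_rfl⟩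

theorem card_subsetStar_inter_subsetStar (hIJ : #(I ∩ J) + 2 = k) :
    #(subsetStar k I ∩ subsetStar k J) = #(I \ J) * #(J \ I) := by
  rw [subsetStar_inter_subsetStar hIJ, card_image_of_injOn, card_product]
  rintro ⟨a, b⟩ hab ⟨a', b'⟩ hab' h
  obtain ⟨ha, hb⟩ := mem_product.mp hab
  obtain ⟨ha', hb'⟩ := mem_product.mp hab'
  have hsdJ := congrArg (· \ J) h
  have hsdI := congrArg (· \ I) h
  simp only [insert_insert_inter_sdiff_right ha hb, insert_insert_inter_sdiff_right ha' hb',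
    insert_insert_inter_sdiff_left ha hb, insert_insert_inter_sdiff_left ha' hb',
    singleton_inj] at hsdJ hsdI
  rw [hsdJ, hsdI]

end Finset

theorem stmt3_general (N k : ℕ) (hk : 2 ≤ k)
    (I J : Finset (Fin N)) (hI : I.card = k) (hJ : J.card = k)
    (hIJ : (I ∩ J).card = k - 2) :
    (((Finset.powersetCard k (Finset.univ : Finset (Fin N))).filter
        (fun T => k - 1 ≤ (T ∩ I).card)) ∩
      ((Finset.powersetCard k (Finset.univ : Finset (Fin N))).filter
        (fun T => k - 1 ≤ (T ∩ J).card))).card = 4 := by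
  have hIJ' : (I ∩ J).card + 2 = k := by omega
  have hIdiff : (I \ J).card = 2 := by have := Finset.card_sdiff_add_card_inter I J; omega
  have hJdiff : (J \ I).card = 2 := by
    have := Finset.card_sdiff_add_card_inter J I
    rw [Finset.inter_comm] at this
    omega
  change (Finset.subsetStar k I ∩ Finset.subsetStar k J).card = 4
  rw [Finset.card_subsetStar_inter_subsetStar hIJ', hIdiff, hJdiff]

/-- If `I, J` are `k`-subsets of `{1,…,N}` with `|I ∩ J| = k - 2` (and `N ≥ k + 2`),
then the intersection of the stars of `I` and `J` has exactly `4` elements. -/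
theorem stmt3 (N k : ℕ) (hk : 2 ≤ k) (hkN : k + 2 ≤ N)
    (I J : Finset (Fin N)) (hI : I.card = k) (hJ : J.card = k)
    (hIJ : (I ∩ J).card = k - 2) :
    (((Finset.powersetCard k (Finset.univ : Finset (Fin N))).filter
        (fun T => k - 1 ≤ (T ∩ I).card)) ∩
      ((Finset.powersetCard k (Finset.univ : Finset (Fin N))).filter
        (fun T => k - 1 ≤ (T ∩ J).card))).card = 4 :=
  stmt3_general N k hk I J hI hJ hIJ
end
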